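/- arXiv:2305.07028 — 3 statements merged into one kernel-verified Lean document; each statement's English description precedes it below -/
import Mathlib

section
/- Combining the tail bound with the expectation bound: let 𝒞 be a finite set, V : 𝒞 → ℕ with maximum V_max, 𝓛 : 𝒞 → ℕ, and t > 1. Define the probability P(C) = t^{2V(C)} / Σ_{C'} t^{2V(C')}. Suppose every C with 𝓛(C) ≤ m satisfies V(C) ≤ V_max − δ. Then the expectation E[𝓛] ≥ m(1 − |𝒞| t^{−2δ}). -/
open Finset

/-- Combining the tail bound with the expectation bound: if every configuration
with few crossing loops (`𝓛 C ≤ m`) sacrifices at least `δ` volume, then the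
expected loop count is at least `m (1 − |𝒞| t^{-2δ})`. -/
theorem expected_loop_count_lower_bound
    {𝒞 : Type*} [Fintype 𝒞] [Nonempty 𝒞]
    (t : ℝ) (ht : 1 < t) (V 𝓛 : 𝒞 → ℕ) (Vmax : ℕ)
    (hVmax : IsGreatest (Set.range V) Vmax) (m δ : ℕ)
    (hsac : ∀ C, 𝓛 C ≤ m → V C + δ ≤ Vmax) :
    (m : ℝ) * (1 - (Fintype.card 𝒞 : ℝ) * t ^ (-(2 * δ : ℤ)))
      ≤ ∑ C : 𝒞, (t ^ (2 * V C) / ∑ C' : 𝒞, t ^ (2 * V C')) * (𝓛 C : ℝ) := by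
  classical
  have ht0 : (0:ℝ) < t := lt_trans one_pos ht
  set S : ℝ := ∑ C' : 𝒞, t ^ (2 * V C') with hS_def
  obtain ⟨⟨C0, hC0⟩, hub⟩ := hVmax
  have hterm_pos : ∀ C : 𝒞, (0:ℝ) < t ^ (2 * V C) := fun C => pow_pos ht0 _
  have hS_pos : 0 < S := Finset.sum_pos (fun C _ => hterm_pos C) univ_nonempty
  have hS_ge : t ^ (2 * Vmax) ≤ S := by
    rw [← hC0]
    exact Finset.single_le_sum (fun C _ => (hterm_pos C).le) (mem_univ C0)
  set A := univ.filter (fun C : 𝒞 => 𝓛 C ≤ m) with hA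
  have hPnn : ∀ C : 𝒞, 0 ≤ t ^ (2 * V C) / S :=
    fun C => div_nonneg (hterm_pos C).le hS_pos.le
  have key : ∑ C ∈ A, t ^ (2 * V C) / S
      ≤ (Fintype.card 𝒞 : ℝ) * t ^ (-(2 * δ : ℤ)) := by
    have h1 : ∀ C ∈ A, t ^ (2 * V C) / S ≤ t ^ (-(2 * δ : ℤ)) := by
      intro C hC
      have hV : V C + δ ≤ Vmax := hsac C (by simpa [hA] using hC)
      rw [div_le_iff₀ hS_pos]
      calc t ^ (2 * V C) = t ^ ((2 * V C : ℕ) : ℤ) := by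
              rw [zpow_natCast]
        _ ≤ t ^ ((2 * Vmax : ℕ) - (2 * δ : ℕ) : ℤ) := by
              apply zpow_le_zpow_right₀ ht.le
              push_cast
              omega
        _ = t ^ (-(2 * δ : ℤ)) * t ^ ((2 * Vmax : ℕ) : ℤ) := by
              rw [← zpow_add₀ ht0.ne']
              congr 1
              push_cast
              ring
        _ ≤ t ^ (-(2 * δ : ℤ)) * S := by
              apply mul_le_mul_of_nonneg_left _ (zpow_nonneg ht0.le _)
              rw [zpow_natCast]; exact hS_ge
    calc ∑ C ∈ A, t ^ (2 * V C) / S ≤ ∑ _C ∈ A, t ^ (-(2 * δ : ℤ)) :=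
          Finset.sum_le_sum h1
      _ = (A.card : ℝ) * t ^ (-(2 * δ : ℤ)) := by
          rw [Finset.sum_const, nsmul_eq_mul]
      _ ≤ (Fintype.card 𝒞 : ℝ) * t ^ (-(2 * δ : ℤ)) := by
          apply mul_le_mul_of_nonneg_right _ (zpow_nonneg ht0.le _)
          exact_mod_cast Finset.card_le_card (Finset.subset_univ A)
  have hsum1 : ∑ C : 𝒞, t ^ (2 * V C) / S = 1 := by
    rw [← Finset.sum_div, div_self hS_pos.ne']
  have hcompl : ∑ C ∈ Aᶜ, t ^ (2 * V C) / S
      = 1 - ∑ C ∈ A, t ^ (2 * V C) / S := by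
    have := Finset.sum_add_sum_compl A (fun C : 𝒞 => t ^ (2 * V C) / S)
    rw [hsum1] at this
    linarith
  calc (m : ℝ) * (1 - (Fintype.card 𝒞 : ℝ) * t ^ (-(2 * δ : ℤ)))
      ≤ (m : ℝ) * (1 - ∑ C ∈ A, t ^ (2 * V C) / S) := by
        apply mul_le_mul_of_nonneg_left _ (Nat.cast_nonneg m)
        linarith
    _ = ∑ C ∈ Aᶜ, (t ^ (2 * V C) / S) * (m : ℝ) := by
        rw [← Finset.sum_mul, hcompl]; ring
    _ ≤ ∑ C ∈ Aᶜ, (t ^ (2 * V C) / S) * (𝓛 C : ℝ) := by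
        apply Finset.sum_le_sum
        intro C hC
        have : ¬ (𝓛 C ≤ m) := by
          simp only [hA, Finset.mem_compl, Finset.mem_filter, Finset.mem_univ,
            true_and] at hC
          exact hC
        exact mul_le_mul_of_nonneg_left (by exact_mod_cast (by omega : m ≤ 𝓛 C))
          (hPnn C)
    _ ≤ ∑ C : 𝒞, (t ^ (2 * V C) / S) * (𝓛 C : ℝ) := by
        apply Finset.sum_le_sum_of_subset_of_nonneg (Finset.subset_univ _)
        intro C _ _
        exact mul_nonneg (hPnn C) (Nat.cast_nonneg _)
end

section
/- Frustration-free ground state characterization: let H = Σ_j P_j where each P_j = v_j v_j† is a rank-one positive semidefinite operator with v_j = t|C_j⟩ − |M(C_j)⟩ for basis states C_j and their images M(C_j) under moves M, t > 0. A vector ψ satisfies Hψ = 0 if and only if t⟨C_j|ψ⟩ = ⟨M(C_j)|ψ⟩ for all j. Moreover, if the moves act ergodically on a finite basis set 𝒞 (any two basis states are connected by a sequence of moves or inverse moves) and each move increases a volume function V by exactly 1, then the zero-energy subspace of H restricted to span(𝒞) is exactly one-dimensional, spanned by Σ_{C∈𝒞} t^{V(C)} |C⟩. -/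
/-!
Writing `A` for the matrix whose rows are the vectors `v_j = t|C_j⟩ − |M(C_j)⟩`, the
Hamiltonian is `H = Aᴴ A`, so `Hψ = 0` iff `Aψ = 0`, i.e. `t ψ(C_j) = ψ(M(C_j))` for every
move. Since every move raises `V` by one, these relations say exactly that `ψ(C) t^{-V(C)}`
is invariant under moves, hence constant on the (single) connected component of the move
graph.
-/

open Relation
open scoped Matrix

theorem Relation.ReflTransGen.apply_eq_of_rel {α β : Type*} {r : α → α → Prop} {f : α → β}
    (h : ∀ a b, r a b → f a = f b) {a b : α} (hab : ReflTransGen r a b) : f a = f b := by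
  induction hab with
  | refl => rfl
  | tail _ hbc ih => exact ih.trans (h _ _ hbc)

section MoveMatrix

open Matrix
open scoped ComplexOrder

variable {𝒞 J : Type*} [Fintype 𝒞] [DecidableEq 𝒞]

/-- Row `j` is the vector `t|C_j⟩ − |M(C_j)⟩`. -/
def moveMatrix (t : ℝ) (src tgt : J → 𝒞) : Matrix J 𝒞 ℂ :=
  Matrix.of fun j C => (t : ℂ) * (if C = src j then 1 else 0) - (if C = tgt j then 1 else 0)

theorem moveMatrix_mulVec (t : ℝ) (src tgt : J → 𝒞) (ψ : 𝒞 → ℂ) (j : J) :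
    (moveMatrix t src tgt *ᵥ ψ) j = t * ψ (src j) - ψ (tgt j) := by
  simp [moveMatrix, mulVec, dotProduct, sub_mul, Finset.sum_sub_distrib]

theorem conjTranspose_moveMatrix_mul_self_mulVec [Fintype J] (t : ℝ) (src tgt : J → 𝒞)
    (ψ : 𝒞 → ℂ) (C : 𝒞) :
    (((moveMatrix t src tgt)ᴴ * moveMatrix t src tgt) *ᵥ ψ) C = ∑ j : J,
      ((t : ℂ) * ψ (src j) - ψ (tgt j)) *
        ((t : ℂ) * (if C = src j then 1 else 0) - (if C = tgt j then 1 else 0)) := by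
  rw [← mulVec_mulVec, mulVec, dotProduct]
  refine Finset.sum_congr rfl fun j _ => ?_
  rw [moveMatrix_mulVec, mul_comm]
  simp only [conjTranspose_apply, moveMatrix, of_apply]
  congr 1
  split_ifs <;> simp

theorem conjTranspose_moveMatrix_mul_self_mulVec_eq_zero_iff [Fintype J] (t : ℝ)
    (src tgt : J → 𝒞) (ψ : 𝒞 → ℂ) :
    ((moveMatrix t src tgt)ᴴ * moveMatrix t src tgt) *ᵥ ψ = 0 ↔
      ∀ j, (t : ℂ) * ψ (src j) = ψ (tgt j) := by
  rw [conjTranspose_mul_self_mulVec_eq_zero, funext_iff]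
  simp only [moveMatrix_mulVec, Pi.zero_apply, sub_eq_zero]

end MoveMatrix

theorem mul_zpow_neg_eq_of_mul_eq {K : Type*} [Field K] {t a b : K} (ht : t ≠ 0) {m n : ℤ}
    (hmn : n = m + 1) (hab : t * a = b) : a * t ^ (-m) = b * t ^ (-n) := by
  rw [← hab, hmn, zpow_neg, zpow_neg, zpow_add_one₀ ht]
  field_simp

theorem forall_mul_eq_iff_exists_eq_mul_zpow {α J K : Type*} [Field K] {t : K} (ht : t ≠ 0)
    {src tgt : J → α} {V : α → ℤ} (hV : ∀ j, V (tgt j) = V (src j) + 1)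
    (hconn : ∀ a b, ReflTransGen (SymmGen fun a b => ∃ j, src j = a ∧ tgt j = b) a b)
    (ψ : α → K) :
    (∀ j, t * ψ (src j) = ψ (tgt j)) ↔ ∃ z : K, ψ = fun a => z * t ^ V a := by
  constructor
  · intro h
    rcases isEmpty_or_nonempty α with hα | ⟨⟨a₀⟩⟩
    · exact ⟨0, Subsingleton.elim _ _⟩
    have hstep : ∀ a b, SymmGen (fun a b => ∃ j, src j = a ∧ tgt j = b) a b →
        ψ a * t ^ (-V a) = ψ b * t ^ (-V b) := by
      rintro a b (⟨j, rfl, rfl⟩ | ⟨j, rfl, rfl⟩)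
      · exact mul_zpow_neg_eq_of_mul_eq ht (hV j) (h j)
      · exact (mul_zpow_neg_eq_of_mul_eq ht (hV j) (h j)).symm
    refine ⟨ψ a₀ * t ^ (-V a₀), funext fun a => ?_⟩
    rw [(hconn a₀ a).apply_eq_of_rel hstep, mul_assoc, ← zpow_add₀ ht, neg_add_cancel, zpow_zero,
      mul_one]
  · rintro ⟨z, rfl⟩ j
    simp only [hV j, zpow_add_one₀ ht]
    ring

/-- Frustration-free ground state characterization for
`H = Σ_j (t|C_j⟩ − |M(C_j)⟩)(t⟨C_j| − ⟨M(C_j)|)`: a state `ψ` has zero energy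
iff `t⟨C_j|ψ⟩ = ⟨M(C_j)|ψ⟩` for all `j`; moreover, if the moves act ergodically
and each move increases the volume `V` by exactly `1`, the zero-energy space is
spanned by `Σ_C t^{V(C)} |C⟩` (in particular it is one-dimensional). -/
theorem frustration_free_ground_state
    {𝒞 J : Type*} [Fintype 𝒞] [DecidableEq 𝒞] [Fintype J]
    (t : ℝ) (ht : 0 < t) (src tgt : J → 𝒞)
    (H : (𝒞 → ℂ) → (𝒞 → ℂ))
    (hH : ∀ ψ C, H ψ C = ∑ j : J,
      ((t : ℂ) * ψ (src j) - ψ (tgt j)) *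
        ((t : ℂ) * (if C = src j then 1 else 0) - (if C = tgt j then 1 else 0)))
    (V : 𝒞 → ℤ) (hV : ∀ j, V (tgt j) = V (src j) + 1)
    (herg : ∀ C C' : 𝒞, Relation.ReflTransGen
      (fun a b => (∃ j, src j = a ∧ tgt j = b) ∨ (∃ j, src j = b ∧ tgt j = a)) C C') :
    (∀ ψ : 𝒞 → ℂ, H ψ = 0 ↔ ∀ j, (t : ℂ) * ψ (src j) = ψ (tgt j)) ∧
    (∀ ψ : 𝒞 → ℂ, H ψ = 0 ↔ ∃ z : ℂ, ψ = fun C => z * (t : ℂ) ^ (V C)) := by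
  have hH_eq : ∀ ψ, H ψ = ((moveMatrix t src tgt)ᴴ * moveMatrix t src tgt) *ᵥ ψ := fun ψ =>
    funext fun C => (hH ψ C).trans (conjTranspose_moveMatrix_mul_self_mulVec t src tgt ψ C).symm
  have hzero : ∀ ψ : 𝒞 → ℂ, H ψ = 0 ↔ ∀ j, (t : ℂ) * ψ (src j) = ψ (tgt j) := fun ψ => by
    rw [hH_eq, conjTranspose_moveMatrix_mul_self_mulVec_eq_zero_iff]
  have ht' : (t : ℂ) ≠ 0 := Complex.ofReal_ne_zero.mpr ht.ne'
  exact ⟨hzero, fun ψ => (hzero ψ).trans (forall_mul_eq_iff_exists_eq_mul_zpow ht' hV herg ψ)⟩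
end

section
/- The number of configurations of nested concentric loop heights: the maximum of the volume function V(C) = Σ_{x,y} φ_C(x,y) over configurations of disjoint simple closed loops on an L×L lattice (with 0 ≤ φ ≤ number of loops enclosing each dual site, loops disjoint and contained in the lattice) is attained by the configuration of ⌊L/2⌋ concentric square loops, and this maximum is Σ_{k=1}^{⌊L/2⌋} (L − 2k)², which is Θ(L³). -/
open Finset

/-- Two sites of the `L × L` grid are adjacent (distance one). -/
def GridAdj {L : ℕ} (p q : Fin L × Fin L) : Prop :=
  ((p.1 : ℕ) = (q.1 : ℕ) ∧ ((p.2 : ℤ) - (q.2 : ℤ)).natAbs = 1) ∨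
  ((p.2 : ℕ) = (q.2 : ℕ) ∧ ((p.1 : ℤ) - (q.1 : ℤ)).natAbs = 1)

/-- `φ` is a valid height field for a configuration of disjoint nested loops on
the `L × L` lattice: it changes by at most one between adjacent dual sites and
vanishes on the boundary. -/
def IsHeightField {L : ℕ} (φ : Fin L × Fin L → ℕ) : Prop :=
  (∀ p q, GridAdj p q → φ p ≤ φ q + 1) ∧
  (∀ p : Fin L × Fin L,
    (p.1 : ℕ) = 0 ∨ (p.1 : ℕ) = L - 1 ∨ (p.2 : ℕ) = 0 ∨ (p.2 : ℕ) = L - 1 → φ p = 0)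

/-!
A height field changes by at most one between neighbours and vanishes on the boundary, so it is
bounded pointwise by the lattice distance to the boundary; that distance is itself a height field
(the single mountain, whose level lines are the `⌊L/2⌋` concentric squares). Summing it layer by
layer, the sites at height at least `k` form an `(L - 2k) × (L - 2k)` square. The resulting sum is at
most `(L/2) L²`, and at least `(L/4) (L/2)²` from its first `L/4` terms.
-/

def edgeDist {L : ℕ} (i : Fin L) : ℕ := min (i : ℕ) (L - 1 - i)

def boundaryDist {L : ℕ} (p : Fin L × Fin L) : ℕ := min (edgeDist p.1) (edgeDist p.2)

lemma edgeDist_le_half {L : ℕ} (i : Fin L) : edgeDist i ≤ L / 2 := by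
  have := i.isLt
  unfold edgeDist
  omega

lemma exists_edgeDist_add_one_eq {L : ℕ} {i : Fin L} (hi : edgeDist i ≠ 0) :
    ∃ j : Fin L, ((i : ℤ) - j).natAbs = 1 ∧ edgeDist j + 1 = edgeDist i := by
  have := i.isLt
  unfold edgeDist at *
  by_cases h : (i : ℕ) ≤ L - 1 - i
  · exact ⟨⟨i - 1, by omega⟩, by simp only; omega, by simp only; omega⟩
  · exact ⟨⟨i + 1, by omega⟩, by simp only; omega, by simp only; omega⟩

lemma exists_gridAdj_boundaryDist_add_one_eq {L : ℕ} {p : Fin L × Fin L}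
    (hp : boundaryDist p ≠ 0) : ∃ q, GridAdj p q ∧ boundaryDist q + 1 = boundaryDist p := by
  obtain ⟨i, j⟩ := p
  simp only [boundaryDist] at *
  rcases le_total (edgeDist i) (edgeDist j) with h | h
  · obtain ⟨i', hii', hi'⟩ := exists_edgeDist_add_one_eq (i := i) (by omega)
    exact ⟨(i', j), Or.inr ⟨rfl, hii'⟩, by simp only; omega⟩
  · obtain ⟨j', hjj', hj'⟩ := exists_edgeDist_add_one_eq (i := j) (by omega)
    exact ⟨(i, j'), Or.inl ⟨rfl, hjj'⟩, by simp only; omega⟩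

lemma boundaryDist_eq_zero_iff {L : ℕ} {p : Fin L × Fin L} :
    boundaryDist p = 0 ↔
      (p.1 : ℕ) = 0 ∨ (p.1 : ℕ) = L - 1 ∨ (p.2 : ℕ) = 0 ∨ (p.2 : ℕ) = L - 1 := by
  have := p.1.isLt
  have := p.2.isLt
  unfold boundaryDist edgeDist
  omega

lemma isHeightField_boundaryDist (L : ℕ) : IsHeightField (boundaryDist (L := L)) := by
  refine ⟨fun p q hpq => ?_, fun p hp => boundaryDist_eq_zero_iff.2 hp⟩
  have := p.1.isLt
  have := q.1.isLt
  have := p.2.isLt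
  have := q.2.isLt
  unfold boundaryDist edgeDist
  rcases hpq with ⟨_, _⟩ | ⟨_, _⟩ <;> omega

lemma IsHeightField.le_boundaryDist {L : ℕ} {φ : Fin L × Fin L → ℕ} (hφ : IsHeightField φ)
    (p : Fin L × Fin L) : φ p ≤ boundaryDist p := by
  induction hn : boundaryDist p generalizing p with
  | zero => exact (hφ.2 p (boundaryDist_eq_zero_iff.1 hn)).le
  | succ n ih =>
    obtain ⟨q, hpq, hq⟩ := exists_gridAdj_boundaryDist_add_one_eq (p := p) (by omega)
    calc φ p ≤ φ q + 1 := hφ.1 p q hpq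
      _ ≤ n + 1 := by grw [ih q (by omega)]

lemma Finset.sum_eq_sum_Icc_card_filter_le {ι : Type*} (s : Finset ι) (f : ι → ℕ) {N : ℕ}
    (hf : ∀ x ∈ s, f x ≤ N) : ∑ x ∈ s, f x = ∑ k ∈ Icc 1 N, #{x ∈ s | k ≤ f x} := by
  simp_rw [card_filter]
  rw [sum_comm]
  refine sum_congr rfl fun x hx => ?_
  have hIcc : {k ∈ Icc 1 N | k ≤ f x} = Icc 1 (f x) := by
    ext k
    simp only [mem_filter, mem_Icc]
    have := hf x hx
    omega
  rw [← card_filter, hIcc, Nat.card_Icc, Nat.add_sub_cancel]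

lemma card_le_edgeDist {L k : ℕ} (hk : k ≠ 0) : #{i : Fin L | k ≤ edgeDist i} = L - 2 * k := by
  rw [card_filter]
  unfold edgeDist
  rw [Fin.sum_univ_eq_sum_range (fun n => if k ≤ min n (L - 1 - n) then 1 else 0),
    ← card_filter]
  have hIcc : {n ∈ range L | k ≤ min n (L - 1 - n)} = Icc k (L - 1 - k) := by
    ext n
    simp only [mem_filter, mem_range, mem_Icc]
    omega
  rw [hIcc, Nat.card_Icc]
  omega

lemma sum_boundaryDist (L : ℕ) :
    ∑ p : Fin L × Fin L, boundaryDist p = ∑ k ∈ Icc 1 (L / 2), (L - 2 * k) ^ 2 := by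
  rw [sum_eq_sum_Icc_card_filter_le univ boundaryDist
    fun p _ => (min_le_left _ _).trans (edgeDist_le_half p.1)]
  refine sum_congr rfl fun k hk => ?_
  simp only [boundaryDist, le_min_iff]
  rw [← univ_product_univ, filter_product (fun i => k ≤ edgeDist i) (fun i => k ≤ edgeDist i),
    card_product, card_le_edgeDist (by simp only [mem_Icc] at hk; omega), sq]

lemma sum_Icc_sub_two_mul_sq_le_cube (L : ℕ) : ∑ k ∈ Icc 1 (L / 2), (L - 2 * k) ^ 2 ≤ L ^ 3 :=
  calc ∑ k ∈ Icc 1 (L / 2), (L - 2 * k) ^ 2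
      ≤ ∑ k ∈ Icc 1 (L / 2), L ^ 2 := sum_le_sum fun k _ => Nat.pow_le_pow_left (by omega) 2
    _ = L / 2 * L ^ 2 := by rw [sum_const, Nat.card_Icc, smul_eq_mul, Nat.add_sub_cancel]
    _ ≤ L * L ^ 2 := Nat.mul_le_mul_right _ (Nat.div_le_self L 2)
    _ = L ^ 3 := by ring

lemma cube_le_sum_Icc_sub_two_mul_sq {L : ℕ} (hL : 8 ≤ L) :
    L ^ 3 ≤ 54 * ∑ k ∈ Icc 1 (L / 2), (L - 2 * k) ^ 2 :=
  calc L ^ 3 ≤ 6 * (L / 4) * (3 * (L / 2) * (3 * (L / 2))) := by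
        rw [pow_three]; gcongr <;> omega
    _ = 54 * ∑ k ∈ Icc 1 (L / 4), (L / 2) ^ 2 := by
        rw [sum_const, Nat.card_Icc, smul_eq_mul, Nat.add_sub_cancel]; ring
    _ ≤ 54 * ∑ k ∈ Icc 1 (L / 4), (L - 2 * k) ^ 2 := by
        gcongr with k hk
        simp only [mem_Icc] at hk
        omega
    _ ≤ 54 * ∑ k ∈ Icc 1 (L / 2), (L - 2 * k) ^ 2 :=
        Nat.mul_le_mul_left _ (sum_le_sum_of_subset (Icc_subset_Icc_right (by omega)))

lemma isTheta_sum_Icc_sub_two_mul_sq :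
    (fun L : ℕ => ((∑ k ∈ Icc 1 (L / 2), (L - 2 * k) ^ 2 : ℕ) : ℝ))
      =Θ[Filter.atTop] fun L : ℕ => (L : ℝ) ^ 3 := by
  refine ⟨.of_bound 1 (.of_forall fun L => ?_),
    .of_bound 54 (Filter.eventually_atTop.2 ⟨8, fun L hL => ?_⟩)⟩
  · rw [Real.norm_of_nonneg (by positivity), Real.norm_of_nonneg (by positivity), one_mul]
    exact_mod_cast sum_Icc_sub_two_mul_sq_le_cube L
  · rw [Real.norm_of_nonneg (by positivity), Real.norm_of_nonneg (by positivity)]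
    exact_mod_cast cube_le_sum_Icc_sub_two_mul_sq hL

/-- The maximum of the volume `V(C) = Σ φ_C` over loop configurations on the
`L × L` lattice is attained by `⌊L/2⌋` concentric square loops (the "single
mountain"), equals `Σ_{k=1}^{⌊L/2⌋} (L − 2k)²`, and this quantity is `Θ(L³)`. -/
theorem single_mountain_maximizes_volume :
    (∀ L : ℕ, IsGreatest
      {V : ℕ | ∃ φ : Fin L × Fin L → ℕ, IsHeightField φ ∧ V = ∑ p, φ p}
      (∑ k ∈ Finset.Icc 1 (L / 2), (L - 2 * k) ^ 2)) ∧
    (fun L : ℕ => ((∑ k ∈ Finset.Icc 1 (L / 2), (L - 2 * k) ^ 2 : ℕ) : ℝ))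
      =Θ[Filter.atTop] (fun L : ℕ => (L : ℝ) ^ 3) := by
  refine ⟨fun L => ⟨⟨boundaryDist, isHeightField_boundaryDist L, (sum_boundaryDist L).symm⟩, ?_⟩,
    isTheta_sum_Icc_sub_two_mul_sq⟩
  rintro V ⟨φ, hφ, rfl⟩
  calc ∑ p, φ p ≤ ∑ p, boundaryDist p := sum_le_sum fun p _ => hφ.le_boundaryDist p
    _ = _ := sum_boundaryDist L
end
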